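/- arXiv:2602.21417 — 2 statements merged into one kernel-verified Lean document; each statement's English description precedes it below -/
import Mathlib

section
/- Let 𝓜 be a finite set of even cardinality M = 2n, ψ : 𝓜 → 𝓜 an involution, and k a nonnegative even integer. Then the sum over all x ∈ X_ψ of m_k(x) equals |𝓜 \ Fix(ψ)| · C(n, k) · 2^k · (M−2)^(n−k) + |Fix(ψ)| · C(n, k/2) · (M−1)^(n−k/2), where C(·,·) denotes binomial coefficients. -/
/-! A ψ-symmetric vector is determined by its first half `f ∈ 𝓜ⁿ`, and `y` occurs in it as often
as `y` and `ψ y` together occur in `f`. Exchanging the two sums, the total is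
`∑_y #{f | occ_f y + occ_f (ψ y) = k}`. For a fixed point `y` this asks that `y` occur exactly
`k / 2` times in `f`; otherwise it asks that exactly `k` coordinates of `f` lie in the two-element
set `{y, ψ y}`. Both are counted by choosing the positions and then the values. -/

open Finset

/-- The set of ψ-symmetric vectors of length `M`: vectors `x` with
`x (M+1-j) = ψ (x j)` for all `j` (0-indexed: `x j.rev = ψ (x j)`). -/
def Xpsi (α : Type*) [Fintype α] [DecidableEq α] (M : ℕ) (ψ : α → α) :
    Finset (Fin M → α) :=
  Finset.univ.filter fun x => ∀ j : Fin M, x j.rev = ψ (x j)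

/-- The number of occurrences of `y` among the components of `x`. -/
def occCount {α : Type*} {M : ℕ} [DecidableEq α] (x : Fin M → α) (y : α) : ℕ :=
  (Finset.univ.filter fun j => x j = y).card

/-- `mCount x k` is the number of elements occurring exactly `k` times among
the components of `x`. -/
def mCount {α : Type*} {M : ℕ} [Fintype α] [DecidableEq α] (x : Fin M → α) (k : ℕ) : ℕ :=
  (Finset.univ.filter fun y => occCount x y = k).card

/-- The set of fixed points of `ψ`. -/
def fixPts (α : Type*) [Fintype α] [DecidableEq α] (ψ : α → α) : Finset α :=
  Finset.univ.filter fun y => ψ y = y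

section Counting

variable {ι α : Type*} [Fintype ι] [DecidableEq ι] [Fintype α] [DecidableEq α]

theorem filter_preimage_eq_piFinset (s : Finset α) (T : Finset ι) :
    ({f : ι → α | ({i | f i ∈ s} : Finset ι) = T} : Finset (ι → α))
      = Fintype.piFinset fun i => if i ∈ T then s else sᶜ := by
  ext f
  simp only [mem_filter, mem_univ, true_and, Fintype.mem_piFinset, Finset.ext_iff]
  refine forall_congr' fun i => ?_
  split_ifs with hi <;> simp [hi]

theorem card_filter_preimage_eq (s : Finset α) (T : Finset ι) :
    #{f : ι → α | ({i | f i ∈ s} : Finset ι) = T}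
      = #s ^ #T * (Fintype.card α - #s) ^ (Fintype.card ι - #T) := by
  rw [filter_preimage_eq_piFinset, Fintype.card_piFinset]
  simp only [apply_ite card, prod_ite, prod_const, filter_mem_eq_inter, filter_notMem_eq_sdiff,
    univ_inter, card_compl, card_univ_sdiff]

theorem card_filter_card_preimage_eq (s : Finset α) (k : ℕ) :
    #{f : ι → α | #{i | f i ∈ s} = k}
      = (Fintype.card ι).choose k * #s ^ k * (Fintype.card α - #s) ^ (Fintype.card ι - k) := by
  rw [card_eq_sum_card_fiberwise (f := fun f : ι → α => ({i | f i ∈ s} : Finset ι))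
    (t := powersetCard k univ) (fun f hf => by simpa using hf)]
  have fiber (T) (hT : T ∈ powersetCard k univ) :
      #{f ∈ {f : ι → α | #{i | f i ∈ s} = k} | ({i | f i ∈ s} : Finset ι) = T}
        = #s ^ k * (Fintype.card α - #s) ^ (Fintype.card ι - k) := by
    rw [mem_powersetCard_univ] at hT
    rw [filter_filter, ← hT, ← card_filter_preimage_eq]
    exact congrArg card <| filter_congr fun f _ => and_iff_right_of_imp (congrArg card)
  rw [sum_congr rfl fiber, sum_const, card_powersetCard, card_univ, smul_eq_mul, mul_assoc]

end Counting

section Occurrences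

variable {α : Type*} [DecidableEq α]

theorem card_filter_mem_eq_sum_occCount {M : ℕ} (x : Fin M → α) (s : Finset α) :
    #{i | x i ∈ s} = ∑ y ∈ s, occCount x y := by
  rw [card_eq_sum_card_fiberwise (f := x) (t := s) (fun i hi => by simpa using hi)]
  refine sum_congr rfl fun y hy => ?_
  rw [occCount, filter_filter]
  exact congrArg card <| filter_congr fun i _ => and_iff_right_of_imp fun h => h ▸ hy

theorem occCount_append {m n : ℕ} (u : Fin m → α) (v : Fin n → α) (y : α) :
    occCount (Fin.append u v) y = occCount u y + occCount v y := by
  simp only [occCount, card_filter, Fin.sum_univ_add, Fin.append_left, Fin.append_right]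

theorem occCount_comp_perm {M : ℕ} (x : Fin M → α) (σ : Equiv.Perm (Fin M)) (y : α) :
    occCount (x ∘ σ) y = occCount x y := by
  simp only [occCount, card_filter]
  exact Equiv.sum_comp σ fun i => if x i = y then 1 else 0

theorem occCount_comp_involutive {M : ℕ} {ψ : α → α} (hψ : Function.Involutive ψ)
    (x : Fin M → α) (y : α) : occCount (ψ ∘ x) y = occCount x (ψ y) := by
  simp only [occCount, Function.comp_apply, hψ.eq_iff]

end Occurrences

section SymmetricExtension

variable {α : Type*} {n : ℕ} (ψ : α → α)

def symmExt (f : Fin n → α) : Fin (n + n) → α :=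
  Fin.append f (ψ ∘ f ∘ Fin.rev)

theorem symmExt_injective : Function.Injective (symmExt ψ (n := n)) := fun f g h =>
  funext fun i => by simpa [symmExt] using congrFun h (Fin.castAdd n i)

variable {ψ}

theorem symmExt_comp_rev (hψ : Function.Involutive ψ) (f : Fin n → α) :
    symmExt ψ f ∘ Fin.rev = ψ ∘ symmExt ψ f := by
  rw [symmExt, Fin.append_comp_rev]
  funext i
  refine Fin.addCases (fun i => ?_) (fun i => ?_) i <;> simp [-Fin.natAdd_eq_addNat, hψ _]

theorem occCount_symmExt [DecidableEq α] (hψ : Function.Involutive ψ) (f : Fin n → α) (y : α) :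
    occCount (symmExt ψ f) y = occCount f y + occCount f (ψ y) := by
  rw [symmExt, occCount_append, occCount_comp_involutive hψ]
  exact congrArg _ (occCount_comp_perm f Fin.revPerm (ψ y))

theorem Xpsi_eq_map [Fintype α] [DecidableEq α] (hψ : Function.Involutive ψ) :
    Xpsi α (n + n) ψ = univ.map ⟨symmExt ψ, symmExt_injective ψ⟩ := by
  ext x
  simp only [Xpsi, mem_filter, mem_univ, true_and, mem_map, Function.Embedding.coeFn_mk]
  constructor
  · intro hx
    refine ⟨fun i => x (Fin.castAdd n i), ?_⟩
    conv_rhs => rw [← Fin.append_castAdd_natAdd (f := x)]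
    refine congrArg (Fin.append _) (funext fun i => ?_)
    rw [Function.comp_apply, Function.comp_apply, ← hx, Fin.rev_castAdd, Fin.rev_rev,
      Fin.natAdd_eq_addNat]
  · rintro ⟨f, rfl⟩ j
    exact congrFun (symmExt_comp_rev hψ f) j

end SymmetricExtension

section SymmetricVectors

variable {α : Type*} [Fintype α] [DecidableEq α]

theorem sum_mCount_eq_sum_card_filter {M : ℕ} (X : Finset (Fin M → α)) (k : ℕ) :
    ∑ x ∈ X, mCount x k = ∑ y, #{x ∈ X | occCount x y = k} := by
  simp only [mCount, card_filter]
  exact sum_comm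

theorem card_filter_occCount_eq (n : ℕ) (y : α) (j : ℕ) :
    #{f : Fin n → α | occCount f y = j} = n.choose j * (Fintype.card α - 1) ^ (n - j) := by
  have h (f : Fin n → α) : occCount f y = #{i | f i ∈ ({y} : Finset α)} := by
    rw [card_filter_mem_eq_sum_occCount, sum_singleton]
  simp_rw [h]
  rw [card_filter_card_preimage_eq, card_singleton, one_pow, mul_one, Fintype.card_fin]

theorem card_filter_occCount_add_occCount_eq (n : ℕ) {y z : α} (hyz : y ≠ z) (j : ℕ) :
    #{f : Fin n → α | occCount f y + occCount f z = j}
      = n.choose j * 2 ^ j * (Fintype.card α - 2) ^ (n - j) := by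
  simp_rw [← sum_pair hyz, ← card_filter_mem_eq_sum_occCount]
  rw [card_filter_card_preimage_eq, card_pair hyz, Fintype.card_fin]

theorem card_filter_occCount_Xpsi {n : ℕ} {ψ : α → α} (hψ : Function.Involutive ψ) (y : α)
    {k : ℕ} (hk : Even k) :
    #{x ∈ Xpsi α (n + n) ψ | occCount x y = k}
      = if ψ y = y then n.choose (k / 2) * (Fintype.card α - 1) ^ (n - k / 2)
        else n.choose k * 2 ^ k * (Fintype.card α - 2) ^ (n - k) := by
  rw [Xpsi_eq_map hψ, filter_map, card_map]
  simp only [Function.comp_def, Function.Embedding.coeFn_mk, occCount_symmExt hψ]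
  split_ifs with hy
  · obtain ⟨j, rfl⟩ := hk
    rw [hy, ← card_filter_occCount_eq n y]
    congr! 2 with f
    omega
  · exact card_filter_occCount_add_occCount_eq n (Ne.symm hy) k

end SymmetricVectors

theorem stmt_5_general {α : Type*} [Fintype α] [DecidableEq α] (n : ℕ)
    (hcard : Fintype.card α = 2 * n) (ψ : α → α) (hψ : ∀ y, ψ (ψ y) = y)
    (k : ℕ) (hk : Even k) :
    ∑ x ∈ Xpsi α (2 * n) ψ, mCount x k
      = (Fintype.card α - (fixPts α ψ).card) * n.choose k * 2 ^ k
          * (2 * n - 2) ^ (n - k)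
        + (fixPts α ψ).card * n.choose (k / 2) * (2 * n - 1) ^ (n - k / 2) := by
  have card_not_fixed : #{y | ¬ψ y = y} = Fintype.card α - #(fixPts α ψ) := by
    rw [← card_univ, ← card_filter_add_card_filter_not (s := univ) (fun y => ψ y = y), fixPts]
    omega
  rw [two_mul n, sum_mCount_eq_sum_card_filter,
    sum_congr rfl fun y _ => card_filter_occCount_Xpsi hψ y hk, sum_ite, sum_const, sum_const,
    smul_eq_mul, smul_eq_mul, card_not_fixed, ← fixPts, hcard, ← two_mul]
  ring

theorem stmt_5 {α : Type*} [Fintype α] [DecidableEq α] (n : ℕ) (hn : 1 ≤ n)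
    (hcard : Fintype.card α = 2 * n) (ψ : α → α) (hψ : ∀ y, ψ (ψ y) = y)
    (k : ℕ) (hk : Even k) :
    ∑ x ∈ Xpsi α (2 * n) ψ, mCount x k
      = (Fintype.card α - (fixPts α ψ).card) * n.choose k * 2 ^ k
          * (2 * n - 2) ^ (n - k)
        + (fixPts α ψ).card * n.choose (k / 2) * (2 * n - 1) ^ (n - k / 2) :=
  stmt_5_general n hcard ψ hψ k hk
end

section
/- For every nonnegative even integer k, the average A(k, 2n) = (1/(2n)^n) Σ_{x ∈ X_{ψ_n}} m_k(x)/(2n) converges, as n → ∞, to (1−θ)/(e·k!) + θ/(e^{1/2} · 2^{k/2} · (k/2)!). -/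
open Finset

/-!
Restricting a ψ-symmetric vector `x` of length `2n` to its first half is a bijection onto all
vectors of length `n`, and the multiplicity of `y` in `x` is the number of first-half entries in
`{y, ψ y}`, counted twice when `y` is fixed. So for uniform `x` the multiplicity of a fixed point
is twice a `Bin(n, 1/(2n))` count and that of any other point is a `Bin(n, 1/n)` count. Summing
over `y`, the average of `m_k / 2n` is the fixed-point density times `P(Bin(n, 1/(2n)) = k/2)`
plus the complementary density times `P(Bin(n, 1/n) = k)`. The density tends to `θ` because
`η < 1`, and the Poisson limit theorem gives the limits `e^{-1/2} (1/2)^{k/2} / (k/2)!` and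
`e^{-1} / k!`.
-/

open Filter Topology

section Hits

variable {ι β : Type*} [Fintype ι] [DecidableEq ι] [Fintype β] [DecidableEq β]

theorem card_filter_card_mem_eq (S : Finset β) (k : ℕ) :
    #{v : ι → β | #{i | v i ∈ S} = k}
      = (Fintype.card ι).choose k * #S ^ k * (Fintype.card β - #S) ^ (Fintype.card ι - k) := by
  have fiber (T : Finset ι) : #{v : ι → β | ({i | v i ∈ S} : Finset ι) = T}
      = #S ^ #T * (Fintype.card β - #S) ^ (Fintype.card ι - #T) := by
    have : ({v : ι → β | ({i | v i ∈ S} : Finset ι) = T} : Finset (ι → β))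
        = Fintype.piFinset fun i => if i ∈ T then S else Sᶜ := by
      ext v
      simp only [Finset.ext_iff, mem_filter, mem_univ, true_and, Fintype.mem_piFinset]
      refine forall_congr' fun i => ?_
      split_ifs with hi <;> simp [hi]
    rw [this, Fintype.card_piFinset]
    simp [apply_ite card, prod_ite, card_compl, filter_not, card_sdiff_of_subset]
  rw [card_eq_sum_card_fiberwise (f := fun v : ι → β => ({i | v i ∈ S} : Finset ι))
    (t := powersetCard k univ) (fun v hv => by simpa using hv),
    sum_congr rfl fun T hT => ?_, sum_const, card_powersetCard, card_univ, smul_eq_mul,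
    mul_assoc]
  rw [mem_powersetCard] at hT
  rw [filter_filter, ← hT.2, ← fiber]
  congr 1
  ext v
  simp only [mem_filter, mem_univ, true_and, and_iff_right_iff_imp]
  rintro rfl
  rfl

theorem card_filter_card_mem_div_eq [Nonempty β] (S : Finset β) (k : ℕ) :
    (#{v : ι → β | #{i | v i ∈ S} = k} : ℝ) / Fintype.card β ^ Fintype.card ι
      = (Fintype.card ι).choose k * (#S / Fintype.card β : ℝ) ^ k
        * (1 - #S / Fintype.card β : ℝ) ^ (Fintype.card ι - k) := by
  rw [card_filter_card_mem_eq]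
  have hβ : (Fintype.card β : ℝ) ≠ 0 := by positivity
  push_cast [Nat.cast_sub (card_le_univ S)]
  obtain hk | hk := le_or_gt k (Fintype.card ι)
  · obtain ⟨d, hd⟩ := Nat.exists_eq_add_of_le hk
    rw [hd, Nat.add_sub_cancel_left, pow_add, one_sub_div hβ, div_pow, div_pow]
    field_simp
  · simp [Nat.choose_eq_zero_of_lt hk]

end Hits

section Halves

variable {β : Type*} {ψ : β → β} {n : ℕ}

def firstHalf (x : Fin (2 * n) → β) : Fin n → β :=
  fun i => x (Fin.castLE (by omega) i)

def symmExtend (ψ : β → β) (v : Fin n → β) : Fin (2 * n) → β :=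
  fun j => if h : (j : ℕ) < n then v ⟨j, h⟩
    else ψ (v ⟨j.rev, by rw [Fin.val_rev]; omega⟩)

theorem mem_Xpsi [Fintype β] [DecidableEq β] {x : Fin (2 * n) → β} :
    x ∈ Xpsi β (2 * n) ψ ↔ ∀ j, x j.rev = ψ (x j) := by
  simp [Xpsi]

theorem symmExtend_mem_Xpsi [Fintype β] [DecidableEq β] (hψ : ∀ y, ψ (ψ y) = y)
    (v : Fin n → β) : symmExtend ψ v ∈ Xpsi β (2 * n) ψ := by
  refine mem_Xpsi.2 fun j => ?_
  have := j.isLt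
  by_cases h : (j : ℕ) < n
  · simp [symmExtend, h, Fin.val_rev, show ¬ 2 * n - (j + 1) < n by omega]
  · simp [symmExtend, h, hψ, Fin.val_rev, show 2 * n - (j + 1) < n by omega]

theorem firstHalf_symmExtend (v : Fin n → β) : firstHalf (symmExtend ψ v) = v := by
  funext i
  simp [firstHalf, symmExtend]

theorem symmExtend_firstHalf [Fintype β] [DecidableEq β] {x : Fin (2 * n) → β}
    (hx : x ∈ Xpsi β (2 * n) ψ) : symmExtend ψ (firstHalf x) = x := by
  funext j
  by_cases h : (j : ℕ) < n
  · simp [symmExtend, firstHalf, h]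
  · simp only [symmExtend, firstHalf, h, dite_false]
    rw [← mem_Xpsi.1 hx]
    congr 1
    ext
    simp only [Fin.val_rev, Fin.castLE_mk]
    omega

theorem card_filter_Xpsi_firstHalf [Fintype β] [DecidableEq β] (hψ : ∀ y, ψ (ψ y) = y)
    (P : (Fin n → β) → Prop) [DecidablePred P] :
    #{x ∈ Xpsi β (2 * n) ψ | P (firstHalf x)} = #{v | P v} := by
  refine card_nbij' firstHalf (symmExtend ψ) (fun x hx => ?_) (fun v hv => ?_)
    (fun x hx => symmExtend_firstHalf (mem_filter.1 hx).1) (fun v _ => firstHalf_symmExtend v)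
  · simpa using (mem_filter.1 hx).2
  · simpa [firstHalf_symmExtend, symmExtend_mem_Xpsi hψ] using hv

theorem card_filter_eq_and_val_lt [DecidableEq β] {M : ℕ} (hn : n ≤ M) (x : Fin M → β)
    (z : β) :
    #{j | x j = z ∧ (j : ℕ) < n} = occCount (fun i : Fin n => x (Fin.castLE hn i)) z := by
  refine (card_bij (fun i _ => Fin.castLE hn i) (fun i hi => ?_) (fun _ _ _ _ h => ?_)
    fun j hj => ?_).symm
  · simpa [occCount] using hi
  · exact Fin.castLE_injective hn h
  · simp only [mem_filter, mem_univ, true_and] at hj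
    exact ⟨⟨j, hj.2⟩, by simpa [occCount] using hj.1, rfl⟩

theorem occCount_eq_firstHalf [Fintype β] [DecidableEq β] (hψ : ∀ y, ψ (ψ y) = y)
    {x : Fin (2 * n) → β} (hx : x ∈ Xpsi β (2 * n) ψ) (y : β) :
    occCount x y = occCount (firstHalf x) y + occCount (firstHalf x) (ψ y) := by
  have second : #{j | x j = y ∧ ¬ (j : ℕ) < n} = #{j | x j = ψ y ∧ (j : ℕ) < n} := by
    refine card_equiv Fin.revPerm fun j => ?_
    have := j.isLt
    simp only [mem_filter, mem_univ, true_and, Fin.revPerm_apply, mem_Xpsi.1 hx, Fin.val_rev]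
    rw [(Function.Involutive.injective hψ).eq_iff]
    exact and_congr_right fun _ => by omega
  rw [occCount, ← card_filter_add_card_filter_not (s := {j | x j = y})
    (fun j : Fin (2 * n) => (j : ℕ) < n), filter_filter, filter_filter, second,
    card_filter_eq_and_val_lt, card_filter_eq_and_val_lt]
  rfl

end Halves

section Counting

variable {β : Type*} [Fintype β] [DecidableEq β] [Nonempty β] {ψ : β → β}

theorem card_filter_occCount_div_of_fixed (hψ : ∀ y, ψ (ψ y) = y) (n m : ℕ) {y : β}
    (hy : ψ y = y) :
    (#{x ∈ Xpsi β (2 * n) ψ | occCount x y = 2 * m} : ℝ) / Fintype.card β ^ n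
      = n.choose m * (1 / Fintype.card β : ℝ) ^ m
        * (1 - 1 / Fintype.card β : ℝ) ^ (n - m) := by
  have : #{x ∈ Xpsi β (2 * n) ψ | occCount x y = 2 * m}
      = #{x ∈ Xpsi β (2 * n) ψ | #{i | firstHalf x i ∈ ({y} : Finset β)} = m} := by
    refine congrArg card (filter_congr fun x hx => ?_)
    rw [occCount_eq_firstHalf hψ hx, hy]
    simp only [occCount, mem_singleton]
    omega
  rw [this, card_filter_Xpsi_firstHalf hψ (fun v => #{i | v i ∈ ({y} : Finset β)} = m)]
  simpa using card_filter_card_mem_div_eq (ι := Fin n) {y} m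

theorem card_filter_occCount_div_of_ne (hψ : ∀ y, ψ (ψ y) = y) (n k : ℕ) {y : β}
    (hy : ψ y ≠ y) :
    (#{x ∈ Xpsi β (2 * n) ψ | occCount x y = k} : ℝ) / Fintype.card β ^ n
      = n.choose k * (2 / Fintype.card β : ℝ) ^ k
        * (1 - 2 / Fintype.card β : ℝ) ^ (n - k) := by
  have : #{x ∈ Xpsi β (2 * n) ψ | occCount x y = k}
      = #{x ∈ Xpsi β (2 * n) ψ | #{i | firstHalf x i ∈ ({y, ψ y} : Finset β)} = k} := by
    refine congrArg card (filter_congr fun x hx => ?_)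
    rw [occCount_eq_firstHalf hψ hx, occCount, occCount, ← card_union_of_disjoint]
    · simp only [← filter_or, mem_insert, mem_singleton]
    · exact disjoint_filter.2 fun i _ h h' => hy (h ▸ h').symm
  rw [this, card_filter_Xpsi_firstHalf hψ (fun v => #{i | v i ∈ ({y, ψ y} : Finset β)} = k)]
  simpa [card_pair (Ne.symm hy)] using card_filter_card_mem_div_eq (ι := Fin n) {y, ψ y} k

theorem sum_mCount_div_eq (hψ : ∀ y, ψ (ψ y) = y) (n m : ℕ) :
    (∑ x ∈ Xpsi β (2 * n) ψ, (mCount x (2 * m) : ℝ))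
        / (Fintype.card β ^ n * Fintype.card β)
      = (#(fixPts β ψ) / Fintype.card β : ℝ)
          * (n.choose m * (1 / Fintype.card β : ℝ) ^ m
            * (1 - 1 / Fintype.card β : ℝ) ^ (n - m))
        + (1 - #(fixPts β ψ) / Fintype.card β : ℝ)
          * (n.choose (2 * m) * (2 / Fintype.card β : ℝ) ^ (2 * m)
            * (1 - 2 / Fintype.card β : ℝ) ^ (n - 2 * m)) := by
  set N : ℝ := (Fintype.card β : ℝ)
  have hN : N ≠ 0 := by positivity
  have swap : ∑ x ∈ Xpsi β (2 * n) ψ, (mCount x (2 * m) : ℝ)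
      = ∑ y, (#{x ∈ Xpsi β (2 * n) ψ | occCount x y = 2 * m} : ℝ) := by
    simp only [mCount, card_filter, Nat.cast_sum]
    exact sum_comm
  have hnonfix : (#{y | ¬ ψ y = y} : ℝ) = N - #(fixPts β ψ) := by
    rw [eq_sub_iff_add_eq', fixPts, ← Nat.cast_add, card_filter_add_card_filter_not, card_univ]
  have fixed : ∑ y ∈ {y | ψ y = y},
      (#{x ∈ Xpsi β (2 * n) ψ | occCount x y = 2 * m} : ℝ) / N ^ n
      = #(fixPts β ψ) * (n.choose m * (1 / N) ^ m * (1 - 1 / N) ^ (n - m)) := by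
    rw [sum_congr rfl fun y hy => ?_, sum_const, nsmul_eq_mul, fixPts]
    exact card_filter_occCount_div_of_fixed hψ n m (mem_filter.1 hy).2
  have nonfixed : ∑ y ∈ {y | ¬ ψ y = y},
      (#{x ∈ Xpsi β (2 * n) ψ | occCount x y = 2 * m} : ℝ) / N ^ n
      = (N - #(fixPts β ψ))
        * (n.choose (2 * m) * (2 / N) ^ (2 * m) * (1 - 2 / N) ^ (n - 2 * m)) := by
    rw [sum_congr rfl fun y hy => ?_, sum_const, nsmul_eq_mul, hnonfix]
    exact card_filter_occCount_div_of_ne hψ n (2 * m) (mem_filter.1 hy).2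
  rw [swap, ← sum_filter_add_sum_filter_not univ fun y => ψ y = y, ← div_div, add_div, sum_div,
    sum_div]
  rw [fixed, nonfixed]
  field_simp

end Counting

theorem tendsto_div_of_abs_sub_mul_le_rpow {ι : Type*} {l : Filter ι} {a b : ι → ℝ}
    {θ C η : ℝ} (hη : η < 1) (hb : Tendsto b l atTop)
    (h : ∀ᶠ i in l, |a i - θ * b i| ≤ C * b i ^ η) :
    Tendsto (fun i => a i / b i) l (𝓝 θ) := by
  have decay : Tendsto (fun i => C * b i ^ (η - 1)) l (𝓝 0) := by
    simpa using ((tendsto_rpow_neg_atTop (by linarith : 0 < 1 - η)).comp hb).const_mul C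
  refine tendsto_sub_nhds_zero_iff.1 (squeeze_zero_norm' ?_ decay)
  filter_upwards [h, hb.eventually_gt_atTop 0] with i hi hbi
  rw [Real.norm_eq_abs, show a i / b i - θ = (a i - θ * b i) / b i by field_simp, abs_div,
    abs_of_pos hbi, Real.rpow_sub hbi, Real.rpow_one, ← mul_div_assoc]
  gcongr

theorem tendsto_mul_const_div_two_mul (c : ℝ) :
    Tendsto (fun n : ℕ => n * (c / (2 * n))) atTop (𝓝 (c / 2)) := by
  refine tendsto_const_nhds.congr' ?_
  filter_upwards [eventually_ge_atTop 1] with n hn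
  have : (n : ℝ) ≠ 0 := by positivity
  field_simp

theorem stmt_11_general (α : ℕ → Type*) [∀ n, Fintype (α n)] [∀ n, DecidableEq (α n)]
    (hcard : ∀ n : ℕ, 1 ≤ n → Fintype.card (α n) = 2 * n)
    (ψ : ∀ n, α n → α n) (hψ : ∀ n y, ψ n (ψ n y) = y)
    (θ η C : ℝ) (hη1 : η < 1)
    (hfix : ∀ n : ℕ, 1 ≤ n →
      |((fixPts (α n) (ψ n)).card : ℝ) - θ * (2 * (n : ℝ))| ≤ C * (2 * (n : ℝ)) ^ η)
    (k : ℕ) (hk : Even k) :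
    Filter.Tendsto
      (fun n : ℕ => ((2 * (n : ℝ)) ^ n)⁻¹ *
        ∑ x ∈ Xpsi (α n) (2 * n) (ψ n), (mCount x k : ℝ) / (2 * (n : ℝ)))
      Filter.atTop
      (nhds ((1 - θ) / (Real.exp 1 * k.factorial)
        + θ / (Real.exp (1 / 2) * 2 ^ (k / 2) * (k / 2).factorial))) := by
  obtain ⟨m, rfl⟩ := hk
  rw [← two_mul, Nat.mul_div_cancel_left m two_pos]
  have density :
      Tendsto (fun n : ℕ => (#(fixPts (α n) (ψ n)) : ℝ) / (2 * n)) atTop (𝓝 θ) :=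
    tendsto_div_of_abs_sub_mul_le_rpow hη1
      (tendsto_natCast_atTop_atTop.const_mul_atTop two_pos) ((eventually_ge_atTop 1).mono hfix)
  have fixedTerm := ProbabilityTheory.tendsto_choose_mul_pow_of_tendsto_mul_atTop m
    (tendsto_mul_const_div_two_mul 1)
  have freeTerm := ProbabilityTheory.tendsto_choose_mul_pow_of_tendsto_mul_atTop (2 * m)
    (tendsto_mul_const_div_two_mul 2)
  have limit := (density.mul fixedTerm).add
    ((tendsto_const_nhds (x := (1 : ℝ)).sub density).mul freeTerm)
  have value : θ * (Real.exp (-(1 / 2)) * (1 / 2) ^ m / m.factorial)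
      + (1 - θ) * (Real.exp (-(2 / 2)) * (2 / 2) ^ (2 * m) / (2 * m).factorial)
      = (1 - θ) / (Real.exp 1 * (2 * m).factorial)
        + θ / (Real.exp (1 / 2) * 2 ^ m * m.factorial) := by
    rw [div_self two_ne_zero, one_pow, one_div_pow, Real.exp_neg, Real.exp_neg]
    field_simp
    ring
  rw [value] at limit
  refine limit.congr' ?_
  filter_upwards [eventually_ge_atTop 1] with n hn
  have : Nonempty (α n) := Fintype.card_pos_iff.1 (by rw [hcard n hn]; omega)
  have average := sum_mCount_div_eq (hψ n) n m
  rw [hcard n hn] at average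
  push_cast at average
  rw [← average, ← sum_div]
  ring

theorem stmt_11 (α : ℕ → Type*) [∀ n, Fintype (α n)] [∀ n, DecidableEq (α n)]
    (hcard : ∀ n : ℕ, 1 ≤ n → Fintype.card (α n) = 2 * n)
    (ψ : ∀ n, α n → α n) (hψ : ∀ n y, ψ n (ψ n y) = y)
    (θ η C : ℝ) (hθ0 : 0 ≤ θ) (hθ1 : θ ≤ 1) (hη0 : 0 ≤ η) (hη1 : η < 1) (hC : 0 < C)
    (hfix : ∀ n : ℕ, 1 ≤ n →
      |((fixPts (α n) (ψ n)).card : ℝ) - θ * (2 * (n : ℝ))| ≤ C * (2 * (n : ℝ)) ^ η)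
    (k : ℕ) (hk : Even k) :
    Filter.Tendsto
      (fun n : ℕ => ((2 * (n : ℝ)) ^ n)⁻¹ *
        ∑ x ∈ Xpsi (α n) (2 * n) (ψ n), (mCount x k : ℝ) / (2 * (n : ℝ)))
      Filter.atTop
      (nhds ((1 - θ) / (Real.exp 1 * k.factorial)
        + θ / (Real.exp (1 / 2) * 2 ^ (k / 2) * (k / 2).factorial))) :=
  stmt_11_general α hcard ψ hψ θ η C hη1 hfix k hk
end
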